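/- Under the same hypotheses, the map $\Phi_\# : \mathcal{C}_0(B_k) \to \bigoplus_{i=0}^k \mathcal{C}_i(B_{k-i})$ sending $c_0$ to the unique tuple $(c_0, c_1, \dots, c_k)$ of the canonical embedding lemma is a chain map from $(\mathcal{C}_0(B_*), \partial_{[1]})$ to the total complex $(\mathrm{CB}_*, \boldsymbol{\partial}_*)$: i.e., $\Phi_\#(\partial_{[1]} c_0) = \boldsymbol{\partial}_k(\Phi_\#(c_0))$. -/

import Mathlib

/-!
Let `S = 𝛛c` be the total boundary of the canonical tuple `c` of `c₀`. The recursion defining `c`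
says exactly that the odd entries of `S` vanish, and `S₀ = ∂_{[1]} c₀` because `c₁ = 0`. Since
`𝛛 ∘ 𝛛 = 0`, the same computation applied to `S` shows that `S` satisfies the recursion of a
canonical tuple. As `∂_{[0]}` is injective in positive even degrees, that recursion has only one
solution with given entry in degree `0`, so `S` is the canonical tuple of `∂_{[1]} c₀`.
-/

/-- Transport along equalities of the two degrees. -/
def castC {C : ℤ → ℤ → Type u} [∀ p i, AddCommGroup (C p i)] {a a' b b' : ℤ}
    (h1 : a = a') (h2 : b = b') : C a b ≃+ C a' b' := by
  subst h1; subst h2; exact AddEquiv.refl _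

/-- `c` is the canonical tuple of the embedding lemma for `c₀ ∈ 𝒞_0(B_k)`. -/
def IsCanonicalTuple {C : ℤ → ℤ → Type u} [∀ p i, AddCommGroup (C p i)]
    (d : ∀ j p i : ℤ, C p i →+ C (p + j - 1) (i - j))
    (k : ℤ) (c0 : C 0 k) (c : ∀ i : ℤ, C i (k - i)) : Prop :=
  c 0 = castC (C := C) rfl (by ring) c0 ∧
  (∀ i : ℤ, i < 0 ∨ k < i → c i = 0) ∧
  (∀ i : ℤ, Odd i → c i = 0) ∧
  (∀ i : ℤ, 0 < i → i ≤ k → Even i →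
    d 0 i (k - i) (c i)
      = - ∑ l ∈ (Finset.Icc (0 : ℤ) (i - 1)).filter (fun l => Even l),
          castC (C := C) (by ring) (by ring) (d (i - l) l (k - l) (c l)))

open Finset

section Casts

variable {C : ℤ → ℤ → Type u} [∀ p i, AddCommGroup (C p i)]

theorem castC_heq {a a' b b' : ℤ} (h1 : a = a') (h2 : b = b') (x : C a b) :
    HEq (castC h1 h2 x) x := by
  subst h1 h2; rfl

theorem castC_castC {a a' a'' b b' b'' : ℤ} (h1 : a = a') (h2 : b = b') (h3 : a' = a'')
    (h4 : b' = b'') (x : C a b) :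
    castC h3 h4 (castC h1 h2 x) = castC (h1.trans h3) (h2.trans h4) x := by
  subst h1 h2 h3 h4; rfl

theorem castC_eq_castC_of_heq {a a' b b' u v : ℤ} (h1 : a = u) (h2 : b = v) (h3 : a' = u)
    (h4 : b' = v) {x : C a b} {y : C a' b'} (h : HEq x y) :
    castC h1 h2 x = castC h3 h4 y := by
  subst h1 h2 h3 h4; rw [eq_of_heq h]

variable (d : ∀ j p i : ℤ, C p i →+ C (p + j - 1) (i - j))

theorem map_castC (j : ℤ) {p p' i i' : ℤ} (h1 : p = p') (h2 : i = i') (x : C p i) :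
    d j p' i' (castC h1 h2 x) = castC (by rw [h1]) (by rw [h2]) (d j p i x) := by
  subst h1 h2; rfl

theorem heq_apply_of_heq {j j' p p' i i' : ℤ} (hj : j = j') (hp : p = p') (hi : i = i')
    {x : C p i} {y : C p' i'} (hxy : HEq x y) : HEq (d j p i x) (d j' p' i' y) := by
  subst hj hp hi; rw [eq_of_heq hxy]

end Casts

section Recursion

variable {C : ℤ → ℤ → Type u} [∀ p i, AddCommGroup (C p i)]
  (d : ∀ j p i : ℤ, C p i →+ C (p + j - 1) (i - j))

/-- `(𝛛_k g)_{n-1}`, for a tuple `g` of degree `k` that vanishes in negative degrees. -/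
noncomputable def boundarySum (k : ℤ) (g : ∀ i : ℤ, C i (k - i)) (n : ℤ) : C (n - 1) (k - n) :=
  ∑ j ∈ Icc 0 n, castC (by ring) (by ring) (d j (n - j) (k - (n - j)) (g (n - j)))

/-- Typed like `d 0 n (k - n) (g n)`, so that the recursion in `IsCanonicalTuple` reads
`d 0 n (k - n) (g n) = -evenLowerSum d k g n` definitionally. -/
noncomputable def evenLowerSum (k : ℤ) (g : ∀ i : ℤ, C i (k - i)) (n : ℤ) :
    C (n + 0 - 1) (k - n - 0) :=
  ∑ l ∈ (Icc 0 (n - 1)).filter (fun l => Even l),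
    castC (by ring) (by ring) (d (n - l) l (k - l) (g l))

theorem boundarySum_eq_castC_add {k : ℤ} {g : ∀ i : ℤ, C i (k - i)} {n : ℤ} (hn : 0 ≤ n)
    (hodd : ∀ l, 0 ≤ l → l < n → Odd l → g l = 0) :
    boundarySum d k g n
      = castC (by ring) (by ring) (d 0 n (k - n) (g n) + evenLowerSum d k g n) := by
  have hreflect : ∑ j ∈ Ioc 0 n,
        (castC (by ring) (by ring) (d j (n - j) (k - (n - j)) (g (n - j))) : C (n - 1) (k - n))
      = ∑ l ∈ Icc 0 (n - 1), castC (by ring) (by ring) (d (n - l) l (k - l) (g l)) := by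
    refine sum_nbij' (fun j => n - j) (fun l => n - l) (fun j hj => ?_) (fun l hl => ?_)
      (fun j _ => by omega) (fun l _ => by omega)
      (fun j _ => castC_eq_castC_of_heq _ _ _ _ (heq_apply_of_heq d (by omega) rfl rfl HEq.rfl))
    all_goals simp only [mem_Ioc, mem_Icc] at *; omega
  have hfilter : ∑ l ∈ (Icc 0 (n - 1)).filter (fun l => Even l),
        (castC (by ring) (by ring) (d (n - l) l (k - l) (g l)) : C (n - 1) (k - n))
      = ∑ l ∈ Icc 0 (n - 1), castC (by ring) (by ring) (d (n - l) l (k - l) (g l)) := by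
    refine sum_filter_of_ne fun l hl hne => Int.not_odd_iff_even.mp fun hl' => hne ?_
    rw [mem_Icc] at hl
    rw [hodd l hl.1 (by omega) hl', map_zero, map_zero]
  rw [boundarySum, ← Ioc_insert_left hn, sum_insert (by simp), hreflect, ← hfilter,
    map_add, evenLowerSum, map_sum]
  simp only [castC_castC]
  exact congrArg₂ (· + ·)
    (castC_eq_castC_of_heq _ _ _ _ (heq_apply_of_heq d rfl (by omega) (by omega)
      (congr_arg_heq g (by omega)))) rfl

theorem evenLowerSum_congr {k : ℤ} {g g' : ∀ i : ℤ, C i (k - i)} {n : ℤ}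
    (h : ∀ l, 0 ≤ l → l < n → g l = g' l) : evenLowerSum d k g n = evenLowerSum d k g' n :=
  sum_congr rfl fun l hl => by
    rw [mem_filter, mem_Icc] at hl
    rw [h l hl.1.1 (by omega)]

theorem eq_of_even_recursion (hinj : ∀ p i, 0 < p → Even p → Function.Injective (d 0 p i))
    {k : ℤ} {g g' : ∀ i : ℤ, C i (k - i)} (h0 : g 0 = g' 0)
    (hodd : ∀ i, 0 ≤ i → i ≤ k → Odd i → g i = g' i)
    (hrec : ∀ i, 0 < i → i ≤ k → Even i → d 0 i (k - i) (g i) = -evenLowerSum d k g i)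
    (hrec' : ∀ i, 0 < i → i ≤ k → Even i → d 0 i (k - i) (g' i) = -evenLowerSum d k g' i) :
    ∀ i, 0 ≤ i → i ≤ k → g i = g' i := by
  suffices h : ∀ n : ℕ, (n : ℤ) ≤ k → g n = g' n by
    intro i hi hik
    lift i to ℕ using hi
    exact h i hik
  intro n
  induction n using Nat.strong_induction_on with
  | _ n ih =>
    intro hnk
    rcases Nat.eq_zero_or_pos n with rfl | hpos
    · exact h0
    rcases Int.even_or_odd (n : ℤ) with hev | hodd'
    · refine hinj _ _ (by omega) hev ?_
      rw [hrec _ (by omega) hnk hev, hrec' _ (by omega) hnk hev,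
        evenLowerSum_congr d fun l hl hln => ?_]
      lift l to ℕ using hl
      exact ih l (by omega) (by omega)
    · exact hodd _ (by omega) hnk hodd'

end Recursion

section TotalBoundary

variable {C : ℤ → ℤ → Type u} [∀ p i, AddCommGroup (C p i)]
  (d : ∀ j p i : ℤ, C p i →+ C (p + j - 1) (i - j))

/-- The components `∑_{q ≤ j} ∂_{[q]} ∂_{[j-q]} = 0` of `𝛛 ∘ 𝛛 = 0`. -/
def IsSquareZeroFamily : Prop :=
  ∀ (j p i : ℤ) (x : C p i),
    ∑ q ∈ Icc (0 : ℤ) j, castC (by ring) (by ring)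
      (d q (p + (j - q) - 1) (i - (j - q)) (d (j - q) p i x)) = (0 : C (p + j - 2) (i - j))

variable {d} in
theorem IsSquareZeroFamily.sum_eq_zero_castC (hrel : IsSquareZeroFamily d)
    (j p i : ℤ) (x : C p i) {a b : ℤ} (ha : p + j - 2 = a) (hb : i - j = b) :
    ∑ q ∈ Icc (0 : ℤ) j, castC (by rw [← ha]; ring) (by rw [← hb]; ring)
        (d q (p + (j - q) - 1) (i - (j - q)) (d (j - q) p i x)) = (0 : C a b) := by
  subst ha hb
  exact hrel j p i x

noncomputable def totalBoundary (k : ℤ) (c : ∀ i : ℤ, C i (k - i)) (i : ℤ) : C i (k - 1 - i) :=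
  ∑ j ∈ Icc 0 (i + 1),
    castC (by ring) (by ring) (d j (i + 1 - j) (k - (i + 1 - j)) (c (i + 1 - j)))

theorem totalBoundary_eq_castC_boundarySum (k : ℤ) (c : ∀ i : ℤ, C i (k - i)) (i : ℤ) :
    totalBoundary d k c i = castC (by ring) (by ring) (boundarySum d k c (i + 1)) := by
  simp only [totalBoundary, boundarySum, map_sum, castC_castC]

theorem totalBoundary_of_neg (hzero : ∀ p i, p ≤ 0 → d 0 p i = 0) (k : ℤ)
    (c : ∀ i : ℤ, C i (k - i)) {i : ℤ} (hi : i < 0) : totalBoundary d k c i = 0 := by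
  refine sum_eq_zero fun j hj => ?_
  obtain rfl : j = 0 := by rw [mem_Icc] at hj; omega
  rw [hzero _ _ (by omega), AddMonoidHom.zero_apply, map_zero]

/-- `𝛛 ∘ 𝛛 = 0`, including the summand `j = n + 1`, which involves `(𝛛c)_{-1} = ∂_{[0]} c_0`:
every term of `hrel` then occurs. -/
theorem sum_d_totalBoundary_eq_zero (hrel : IsSquareZeroFamily d) (k : ℤ)
    (c : ∀ i : ℤ, C i (k - i)) (n : ℤ) :
    (∑ j ∈ Icc 0 (n + 1), castC (by ring) (by ring)
        (d j (n - j) (k - 1 - (n - j)) (totalBoundary d k c (n - j))) :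
      C (n - 1) (k - 1 - n)) = 0 := by
  simp only [totalBoundary, map_sum, map_castC, castC_castC]
  -- regroup the terms `∂_{[j]} ∂_{[s]} c_r` with `j + s + r = n + 1` by `r`
  rw [sum_sigma']
  refine (sum_nbij' (t := (Icc 0 (n + 1)).sigma fun r => Icc 0 (n + 1 - r))
    (g := fun b => castC (by ring) (by ring)
      (d b.2 (b.1 + (n + 1 - b.1 - b.2) - 1) (k - b.1 - (n + 1 - b.1 - b.2))
        (d (n + 1 - b.1 - b.2) b.1 (k - b.1) (c b.1))))
    (fun a => ⟨n + 1 - a.1 - a.2, a.1⟩) (fun b => ⟨b.2, n + 1 - b.1 - b.2⟩)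
    (fun a ha => ?_) (fun b hb => ?_) (fun a _ => ?_) (fun b _ => ?_) (fun a _ => ?_)).trans ?_
  · simp only [mem_sigma, mem_Icc] at *; omega
  · simp only [mem_sigma, mem_Icc] at *; omega
  · exact Sigma.ext rfl (heq_of_eq (by dsimp only; omega))
  · exact Sigma.ext (by dsimp only; omega) HEq.rfl
  · obtain ⟨j, s⟩ := a
    dsimp only
    exact castC_eq_castC_of_heq _ _ _ _
      (heq_apply_of_heq d (by omega) (by omega) (by omega)
        (heq_apply_of_heq d (by omega) (by omega) (by omega) (congr_arg_heq c (by omega))))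
  · rw [sum_sigma]
    exact sum_eq_zero fun r _ =>
      hrel.sum_eq_zero_castC (n + 1 - r) r (k - r) (c r) (by ring) (by ring)

theorem boundarySum_totalBoundary_eq_zero
    (hrel : IsSquareZeroFamily d) (hzero : ∀ p i, p ≤ 0 → d 0 p i = 0) (k : ℤ)
    (c : ∀ i : ℤ, C i (k - i)) {n : ℤ} (hn : 0 ≤ n) :
    boundarySum d (k - 1) (totalBoundary d k c) n = 0 := by
  have h := sum_d_totalBoundary_eq_zero d hrel k c n
  rwa [← Ico_insert_right (by omega), sum_insert (by simp),
    totalBoundary_of_neg d hzero k c (by omega), map_zero, map_zero, zero_add,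
    show Ico 0 (n + 1) = Icc 0 n by ext; simp only [mem_Ico, mem_Icc]; omega] at h

end TotalBoundary

namespace IsCanonicalTuple

variable {C : ℤ → ℤ → Type u} [∀ p i, AddCommGroup (C p i)]
  {d : ∀ j p i : ℤ, C p i →+ C (p + j - 1) (i - j)} {k : ℤ} {c0 : C 0 k}
  {c : ∀ i : ℤ, C i (k - i)}

theorem d_zero_eq (hc : IsCanonicalTuple d k c0 c) {i : ℤ} (hi : 0 < i) (hik : i ≤ k)
    (hev : Even i) : d 0 i (k - i) (c i) = -evenLowerSum d k c i :=
  hc.2.2.2 i hi hik hev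

theorem totalBoundary_zero (hc : IsCanonicalTuple d k c0 c) :
    totalBoundary d k c 0 = castC (by ring) (by ring) (d 1 0 k c0) := by
  have hpair : Icc (0 : ℤ) (0 + 1) = {0, 1} := by
    ext; simp only [mem_Icc, mem_insert, mem_singleton]; omega
  rw [totalBoundary, hpair, sum_pair zero_ne_one, hc.2.2.1 _ (by decide), map_zero, map_zero,
    zero_add]
  exact castC_eq_castC_of_heq _ _ _ _ (heq_apply_of_heq d rfl (by ring) (by ring)
    ((congr_arg_heq c (by ring)).trans ((heq_of_eq hc.1).trans (castC_heq _ _ c0))))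

theorem totalBoundary_of_odd (hc : IsCanonicalTuple d k c0 c) {i : ℤ} (hi : 0 ≤ i) (hik : i ≤ k - 1)
    (hodd : Odd i) : totalBoundary d k c i = 0 := by
  rw [totalBoundary_eq_castC_boundarySum,
    boundarySum_eq_castC_add d (by omega) fun l _ _ hl => hc.2.2.1 l hl,
    hc.d_zero_eq (by omega) (by omega) hodd.add_one, neg_add_cancel, map_zero, map_zero]

theorem totalBoundary_d_zero_eq (hc : IsCanonicalTuple d k c0 c) (hrel : IsSquareZeroFamily d)
    (hzero : ∀ p i, p ≤ 0 → d 0 p i = 0) {i : ℤ} (hi : 0 < i) (hik : i ≤ k - 1) :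
    d 0 i (k - 1 - i) (totalBoundary d k c i)
      = -evenLowerSum d (k - 1) (totalBoundary d k c) i := by
  have h := boundarySum_totalBoundary_eq_zero d hrel hzero k c hi.le
  rw [boundarySum_eq_castC_add d hi.le
      fun l hl _ hodd => hc.totalBoundary_of_odd hl (by omega) hodd,
    AddEquiv.map_eq_zero_iff] at h
  exact eq_neg_of_add_eq_zero_left h

end IsCanonicalTuple

theorem canonical_embedding_is_chain_map
    {C : ℤ → ℤ → Type u} [∀ p i, AddCommGroup (C p i)]
    (d : ∀ j p i : ℤ, C p i →+ C (p + j - 1) (i - j))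
    (hrel : ∀ (j p i : ℤ) (x : C p i),
      ∑ q ∈ Finset.Icc (0 : ℤ) j,
        castC (C := C) (by ring) (by ring)
          (d q (p + (j - q) - 1) (i - (j - q)) (d (j - q) p i x)) =
        (0 : C (p + j - 2) (i - j)))
    (hd0 : ∀ p i : ℤ,
      (0 < p ∧ Even p → Function.Bijective (d 0 p i)) ∧
      (¬(0 < p ∧ Even p) → d 0 p i = 0)) :
    ∀ (k : ℤ) (c0 : C 0 k) (c : ∀ i : ℤ, C i (k - i))
      (e : ∀ i : ℤ, C i (k - 1 - i)), 0 ≤ k →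
      IsCanonicalTuple d k c0 c →
      IsCanonicalTuple d (k - 1)
        (castC (C := C) (show (0 : ℤ) + 1 - 1 = 0 by ring) rfl (d 1 0 k c0)) e →
      ∀ i : ℤ, 0 ≤ i → i ≤ k - 1 →
        e i =
          (∑ j ∈ Finset.Icc (0 : ℤ) (i + 1),
            castC (C := C) (by ring) (by ring)
              (d j (i + 1 - j) (k - (i + 1 - j)) (c (i + 1 - j))) :
            C i (k - 1 - i)) := by
  intro k c0 c e _ hc he
  have hinj p i (hp : 0 < p) (hev : Even p) : Function.Injective (d 0 p i) :=
    ((hd0 p i).1 ⟨hp, hev⟩).injective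
  have hzero p i (hp : p ≤ 0) : d 0 p i = 0 := (hd0 p i).2 fun h => by omega
  refine eq_of_even_recursion d hinj (g' := totalBoundary d k c) ?_ ?_ he.2.2.2
    fun i hi hik _ => hc.totalBoundary_d_zero_eq hrel hzero hi hik
  · rw [he.1, castC_castC, hc.totalBoundary_zero]
  · intro i hi hik hodd
    rw [he.2.2.1 i hodd, hc.totalBoundary_of_odd hi hik hodd]
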